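/- For a big-step semantics: c ⇒ wrong is inductively derivable in the wrong-extended rules if and only if the initial partial evaluation tree with single node c ⇒ ? reaches, in finitely many transition steps, a stuck partial evaluation tree (one that is irreducible and whose root judgement is incomplete). -/

import Mathlib

/-- Judgements over configurations `C` and extended results `Option R`
    (`none` stands for the special extra result such as `?`, `wrong`, or `∞`). -/
abbrev Judg (C R : Type) := C × Option R

/-- Lift a complete judgement to an extended judgement. -/
def liftJ {C R : Type} (j : C × R) : Judg C R := (j.1, some j.2)

/-- Bounded-premises condition. -/
def BP {C R : Type} (Rules : Set (List (C × R) × (C × R))) : Prop :=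
  ∀ c : C, ∃ b : ℕ, ∀ js res, (js, (c, res)) ∈ Rules → js.length ≤ b

/-- The extended rule set `Rules_?`: original rules (lifted), start axioms
    `c ⇒ ?`, and partial rules. -/
def RulesQ {C R : Type} (Rules : Set (List (C × R) × (C × R))) :
    Set (List (Judg C R) × Judg C R) :=
  { r | (∃ c : C, r = ([], (c, none)))
      ∨ (∃ (js : List (C × R)) (c : C) (res : R), (js, (c, res)) ∈ Rules ∧ r = (js.map liftJ, (c, some res)))
      ∨ (∃ (js : List (C × R)) (c : C) (res : R) (i : ℕ) (hi : i < js.length) (u : Option R),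
          (js, (c, res)) ∈ Rules ∧
          r = ((js.take i).map liftJ ++ [((js[i]'hi).1, u)], (c, none))) }

/-- Ordered trees labelled in `L`: partial functions from positions (lists of
    child indices) to labels, with nonempty, prefix-closed,
    sibling-downward-closed domain. -/
structure OTree (L : Type) where
  label : List ℕ → Option L
  root_isSome : (label []).isSome
  pref : ∀ α n, (label (α ++ [n])).isSome → (label α).isSome
  sib : ∀ α n k, (label (α ++ [n])).isSome → k ≤ n → (label (α ++ [k])).isSome

/-- A tree is an evaluation tree in a rule set: at every node, the ordered
    children labels together with the node label form a rule. -/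
def IsTreeIn {L : Type} (Rules : Set (List L × L)) (t : OTree L) : Prop :=
  ∀ α l, t.label α = some l →
    ∃ ps : List L, (∀ i : ℕ, t.label (α ++ [i]) = ps[i]?) ∧ (ps, l) ∈ Rules

/-- Partial evaluation trees: evaluation trees in `Rules_?`. -/
def IsPET {C R : Type} (Rules : Set (List (C × R) × (C × R)))
    (t : OTree (Judg C R)) : Prop :=
  IsTreeIn (RulesQ Rules) t

/-- The refinement relation `⊑` on trees labelled by possibly-incomplete
    judgements. -/
def TreeLE {C R : Type} (t t' : OTree (Judg C R)) : Prop :=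
  (∀ α, (t.label α).isSome → (t'.label α).isSome) ∧
  ∀ α c u, t.label α = some (c, u) →
    (∃ (u' : Option R), t'.label α = some (c, u')) ∧
    (u.isSome → ∀ β, t.label (α ++ β) = t'.label (α ++ β))

/-- Strict refinement `⊏`. -/
def TreeLT {C R : Type} (t t' : OTree (Judg C R)) : Prop :=
  TreeLE t t' ∧ t ≠ t'

/-- A tree is finite if its domain is finite. -/
def TreeFinite {L : Type} (t : OTree L) : Prop :=
  Set.Finite {α | (t.label α).isSome}

/-- Well-formedness: every subtree rooted at a complete node is finite. -/
def WellFormed {C R : Type} (t : OTree (Judg C R)) : Prop :=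
  ∀ α c r, t.label α = some (c, some r) →
    Set.Finite {β | (t.label (α ++ β)).isSome}

/-- `t` is a least upper bound of the sequence `f` w.r.t. `⊑`. -/
def IsLubSeq {C R : Type} (f : ℕ → OTree (Judg C R)) (t : OTree (Judg C R)) : Prop :=
  (∀ n, TreeLE (f n) t) ∧ ∀ t', (∀ n, TreeLE (f n) t') → TreeLE t t'

/-- Inductive derivability in a rule set with finite-list premises. -/
inductive IndDerives {J : Type} (Rules : Set (List J × J)) : J → Prop where
  | node (ps : List J) (j : J) : (ps, j) ∈ Rules →
      (∀ p ∈ ps, IndDerives Rules p) → IndDerives Rules j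

/-- A set of judgements is consistent w.r.t. a rule set. -/
def ConsistentL {J : Type} (Rules : Set (List J × J)) (X : Set J) : Prop :=
  ∀ j ∈ X, ∃ (ps : List J), (ps, j) ∈ Rules ∧ ∀ p ∈ ps, p ∈ X

/-- Coinductive derivability: membership in some consistent set. -/
def CoDerives {J : Type} (Rules : Set (List J × J)) (j : J) : Prop :=
  ∃ (X : Set J), ConsistentL Rules X ∧ j ∈ X

/-- Derivability in a generalised inference system (rules + corules):
    membership in a consistent set all of whose elements have a finite
    derivation using both rules and corules. -/
def GenDerives {J : Type} (rules corules : Set (List J × J)) (j : J) : Prop :=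
  ∃ (X : Set J), ConsistentL rules X ∧ (∀ x ∈ X, IndDerives (rules ∪ corules) x) ∧ j ∈ X
/-- The single-node tree. -/
def leafT {L : Type} (l : L) : OTree L where
  label α := if α = [] then some l else none
  root_isSome := by simp
  pref := by
    intro α n h
    simp at h
  sib := by
    intro α n k h _
    simp at h

/-- The tree with root label `l` and ordered list of immediate subtrees `ts`. -/
def nodeT {L : Type} (l : L) (ts : List (OTree L)) : OTree L where
  label α :=
    match α with
    | [] => some l
    | i :: β => (ts[i]?).bind fun t => t.label β
  root_isSome := by simp
  pref := by
    intro α n h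
    match α with
    | [] => rfl
    | i :: β =>
      replace h : (ts[i]?.bind fun t => t.label (β ++ [n])).isSome = true := h
      show (ts[i]?.bind fun t => t.label β).isSome = true
      rcases hts : ts[i]? with _ | t
      · rw [hts] at h; simp at h
      · rw [hts] at h
        simpa using t.pref β n (by simpa using h)
  sib := by
    intro α n k h hk
    match α with
    | [] =>
      replace h : (ts[n]?.bind fun t => t.label []).isSome = true := h
      show (ts[k]?.bind fun t => t.label []).isSome = true
      rcases hts : ts[n]? with _ | t
      · rw [hts] at h; simp at h
      · have hn : n < ts.length := by
          by_contra hc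
          rw [List.getElem?_eq_none (by omega)] at hts
          simp at hts
        have hk' : k < ts.length := lt_of_le_of_lt hk hn
        rw [List.getElem?_eq_getElem hk']
        simpa using (ts[k]'hk').root_isSome
    | i :: β =>
      replace h : (ts[i]?.bind fun t => t.label (β ++ [n])).isSome = true := h
      show (ts[i]?.bind fun t => t.label (β ++ [k])).isSome = true
      rcases hts : ts[i]? with _ | t
      · rw [hts] at h; simp at h
      · rw [hts] at h
        simpa using t.sib β n k (by simpa using h) hk

/-- The transition relation on (finite) partial evaluation trees. -/
inductive Step {C R : Type} (Rules : Set (List (C × R) × (C × R))) :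
    OTree (Judg C R) → OTree (Judg C R) → Prop where
  | tr1 (c : C) (r : R) (h : ([], (c, r)) ∈ Rules) :
      Step Rules (leafT (c, none)) (leafT (c, some r))
  | tr2 (js : List (C × R)) (c : C) (res : R) (hne : js ≠ [])
      (h : (js, (c, res)) ∈ Rules) :
      Step Rules (leafT (c, none))
        (nodeT (c, none) [leafT ((js.head hne).1, none)])
  | tr3 (js : List (C × R)) (c : C) (res : R) (trs : List (OTree (Judg C R)))
      (h : (js, (c, res)) ∈ Rules) (hlen : trs.length = js.length)
      (hroots : ∀ (k : ℕ) (hk : k < js.length),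
        ∃ (t : OTree (Judg C R)), trs[k]? = some t ∧
          t.label [] = some (liftJ (js[k]'hk))) :
      Step Rules (nodeT (c, none) trs) (nodeT (c, some res) trs)
  | tr4 (js : List (C × R)) (c : C) (res : R) (trs : List (OTree (Judg C R)))
      (h : (js, (c, res)) ∈ Rules) (hne : trs ≠ [])
      (hlt : trs.length < js.length)
      (hroots : ∀ (k : ℕ) (hk : k < trs.length),
        ∃ (t : OTree (Judg C R)), trs[k]? = some t ∧
          t.label [] = some (liftJ (js[k]'(Nat.lt_trans hk hlt)))) :
      Step Rules (nodeT (c, none) trs)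
        (nodeT (c, none) (trs ++ [leafT ((js[trs.length]'hlt).1, none)]))
  | tr5 (js : List (C × R)) (c : C) (res : R) (trs : List (OTree (Judg C R)))
      (t t' : OTree (Judg C R))
      (h : (js, (c, res)) ∈ Rules)
      (hlt : trs.length < js.length)
      (hroots : ∀ (k : ℕ) (hk : k < trs.length),
        ∃ (s : OTree (Judg C R)), trs[k]? = some s ∧
          s.label [] = some (liftJ (js[k]'(Nat.lt_trans hk hlt))))
      (hconf : t.label [] = some ((js[trs.length]'hlt).1, none))
      (hstep : Step Rules t t') :
      Step Rules (nodeT (c, none) (trs ++ [t])) (nodeT (c, none) (trs ++ [t']))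
/-- Trace results: a finite trace paired with a result, or an infinite trace. -/
abbrev TrRes (C R : Type) := (List C × R) ⊕ Stream' C

/-- The trace-extended rule set `Rules_tr`: finite-trace rules and
    infinite-trace rules. -/
def RulesTr {C R : Type} (Rules : Set (List (C × R) × (C × R))) :
    Set (List (C × TrRes C R) × (C × TrRes C R)) :=
  { r | (∃ (js : List (C × R)) (c : C) (res : R) (σs : List (List C)),
          (js, (c, res)) ∈ Rules ∧ σs.length = js.length ∧
          r = ((js.zip σs).map (fun p => (p.1.1, Sum.inl (p.2, p.1.2))),
               (c, Sum.inl (c :: σs.flatten, res))))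
      ∨ (∃ (js : List (C × R)) (c : C) (res : R) (i : ℕ) (hi : i < js.length)
            (σs : List (List C)) (σ : Stream' C),
          (js, (c, res)) ∈ Rules ∧ σs.length = i ∧
          r = (((js.take i).zip σs).map (fun p => (p.1.1, Sum.inl (p.2, p.1.2))) ++
                 [((js[i]'hi).1, Sum.inr σ)],
               (c, Sum.inr ((c :: σs.flatten) ++ₛ σ)))) }

/-- Equality of rules up to an index `i`: same conclusion configuration, same
    first `i` premises, same configuration in the `(i+1)`-th premise
    (`i` is 0-based here), with a prescribed result `r'` in that premise. -/
def AgreeUpTo {C R : Type} (Rules : Set (List (C × R) × (C × R)))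
    (js : List (C × R)) (c : C) (i : ℕ) (hi : i < js.length) (r' : R) : Prop :=
  ∃ (js' : List (C × R)) (res' : R) (hi' : i < js'.length),
    (js', (c, res')) ∈ Rules ∧ js'.take i = js.take i ∧
    (js'[i]'hi').1 = (js[i]'hi).1 ∧ (js'[i]'hi').2 = r'

/-- The wrong-extended rule set `Rules_wr` over results `R + {wrong}`
    (`none` stands for `wrong`): original rules, wrong-configuration axioms,
    wrong-result rules and wrong-propagation rules. -/
def RulesWr {C R : Type} (Rules : Set (List (C × R) × (C × R))) :
    Set (List (Judg C R) × Judg C R) :=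
  { r | (∃ (js : List (C × R)) (c : C) (res : R),
          (js, (c, res)) ∈ Rules ∧ r = (js.map liftJ, (c, some res)))
      ∨ (∃ (c : C), (¬ ∃ (js : List (C × R)) (res : R), (js, (c, res)) ∈ Rules) ∧
          r = ([], (c, none)))
      ∨ (∃ (js : List (C × R)) (c : C) (res : R) (i : ℕ) (hi : i < js.length) (r' : R),
          (js, (c, res)) ∈ Rules ∧ ¬ AgreeUpTo Rules js c i hi r' ∧
          r = ((js.take i).map liftJ ++ [((js[i]'hi).1, some r')], (c, none)))
      ∨ (∃ (js : List (C × R)) (c : C) (res : R) (i : ℕ) (hi : i < js.length),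
          (js, (c, res)) ∈ Rules ∧
          r = ((js.take i).map liftJ ++ [((js[i]'hi).1, none)], (c, none))) }

/-- The divergence-extended rule set `Rules_∞` over results `R + {∞}`
    (`none` stands for `∞`): original rules plus divergence-propagation
    rules. -/
def RulesInf {C R : Type} (Rules : Set (List (C × R) × (C × R))) :
    Set (List (Judg C R) × Judg C R) :=
  { r | (∃ (js : List (C × R)) (c : C) (res : R),
          (js, (c, res)) ∈ Rules ∧ r = (js.map liftJ, (c, some res)))
      ∨ (∃ (js : List (C × R)) (c : C) (res : R) (i : ℕ) (hi : i < js.length),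
          (js, (c, res)) ∈ Rules ∧
          r = ((js.take i).map liftJ ++ [((js[i]'hi).1, none)], (c, none))) }

/-- The coaxioms for divergence: `c ⇒ ∞` for every configuration `c`. -/
def CoAx (C R : Type) : Set (List (Judg C R) × Judg C R) :=
  { r | ∃ (c : C), r = ([], (c, none)) }

/-- The trace-forgetting map: `(σ, r) ↦ r` and `σ^∞ ↦ ∞`. -/
def uForget {C R : Type} : TrRes C R → Option R :=
  Sum.elim (fun p => some p.2) (fun _ => none)

/-!
Completeness: by induction on a derivation in `Rules_wr`, the run from `c ⇒ ?` evaluates the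
premises of the last rule from left to right and ends in a tree with root `c ⇒ r`, or, for
`c ⇒ wrong`, in a stuck tree. For a wrong-configuration axiom no transition leaves the leaf; for a
wrong-result rule the side condition that no rule agrees up to the `i`-th premise is exactly what
forbids closing or extending the node (`tr3`, `tr4`); for wrong-propagation the last child is
stuck, which blocks `tr5`.

Soundness: every tree reachable from an initial one is `Sound`: its complete roots are derivable in
`Rules_wr`, and each incomplete node evaluates a prefix of the premises of some rule. In a stuck
sound tree the incomplete root is a leaf without rules (wrong-configuration axiom), or a node whose
last child is stuck (wrong-propagation) or complete while no rule matches the children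
(wrong-result).
-/

open Relation

theorem OTree.ext {L : Type} {t t' : OTree L} (h : t.label = t'.label) : t = t' := by
  cases t; cases t'; simp_all

section Trees

variable {L : Type}

@[simp] theorem leafT_label (l : L) (α : List ℕ) :
    (leafT l).label α = if α = [] then some l else none := rfl

@[simp] theorem nodeT_label_nil (l : L) (ts : List (OTree L)) :
    (nodeT l ts).label [] = some l := rfl

@[simp] theorem nodeT_label_cons (l : L) (ts : List (OTree L)) (i : ℕ) (β : List ℕ) :
    (nodeT l ts).label (i :: β) = ts[i]?.bind (·.label β) := rfl

theorem nodeT_inj {l l' : L} {ts ts' : List (OTree L)} (h : nodeT l ts = nodeT l' ts') :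
    l = l' ∧ ts = ts' := by
  have hlabel (α : List ℕ) : (nodeT l ts).label α = (nodeT l' ts').label α := by rw [h]
  refine ⟨by simpa using hlabel [], List.ext_getElem? fun i => ?_⟩
  have hchild (β : List ℕ) : ts[i]?.bind (·.label β) = ts'[i]?.bind (·.label β) :=
    hlabel (i :: β)
  rcases hi : ts[i]? with _ | t <;> rcases hi' : ts'[i]? with _ | t'
  · rfl
  · simpa [hi, hi', t'.root_isSome] using congrArg Option.isSome (hchild [])
  · simpa [hi, hi', t.root_isSome] using congrArg Option.isSome (hchild [])
  · exact congrArg some (OTree.ext (funext fun β => by simpa [hi, hi'] using hchild β))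

theorem leafT_ne_nodeT {l l' : L} {ts : List (OTree L)} (hts : ts ≠ []) :
    leafT l ≠ nodeT l' ts := by
  intro h
  obtain ⟨t, ts, rfl⟩ := List.exists_cons_of_ne_nil hts
  simpa [t.root_isSome] using congrArg (fun t => (t.label [0]).isSome) h

end Trees

section RootsMatch

variable {C R : Type} {Rules : Set (List (C × R) × (C × R))}

theorem liftJ_injective : Function.Injective (liftJ : C × R → Judg C R) := by
  rintro ⟨c, r⟩ ⟨c', r'⟩ h
  simpa [liftJ] using h

/-- The roots of `ts` are the first `ts.length` premises of `js`, as complete judgements. -/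
def RootsMatch (ts : List (OTree (Judg C R))) (js : List (C × R)) : Prop :=
  ts.map (·.label []) = (js.take ts.length).map (some ∘ liftJ)

@[simp] theorem rootsMatch_nil (js : List (C × R)) : RootsMatch [] js := by
  simp [RootsMatch]

theorem RootsMatch.length_le {ts : List (OTree (Judg C R))} {js : List (C × R)}
    (h : RootsMatch ts js) : ts.length ≤ js.length := by
  simpa using congrArg List.length h

theorem rootsMatch_iff {ts : List (OTree (Judg C R))} {js : List (C × R)} :
    RootsMatch ts js ↔ ∃ hle : ts.length ≤ js.length,
      ∀ k (hk : k < ts.length), ts[k].label [] = some (liftJ (js[k]'(hk.trans_le hle))) := by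
  refine ⟨fun h => ⟨h.length_le, fun k hk => ?_⟩, fun ⟨hle, h⟩ => ?_⟩
  · have hk' := congrArg (·[k]?) h
    simp only [List.getElem?_map, List.getElem?_take_of_lt hk, List.getElem?_eq_getElem hk,
      List.getElem?_eq_getElem (hk.trans_le h.length_le), Option.map_some, Option.some_inj,
      Function.comp_apply] at hk'
    exact hk'
  · exact List.ext_getElem (by simpa using hle) fun k hk _ => by
      simpa using h k (by simpa using hk)

theorem RootsMatch.exists_getElem? {ts : List (OTree (Judg C R))} {js : List (C × R)}
    (h : RootsMatch ts js) (k : ℕ) (hk : k < ts.length) (hkj : k < js.length) :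
    ∃ t, ts[k]? = some t ∧ t.label [] = some (liftJ js[k]) :=
  ⟨ts[k], List.getElem?_eq_getElem hk, (rootsMatch_iff.mp h).2 k hk⟩

theorem rootsMatch_of_getElem? {ts : List (OTree (Judg C R))} {js : List (C × R)}
    (hle : ts.length ≤ js.length)
    (h : ∀ k (hk : k < ts.length), ∃ t, ts[k]? = some t ∧
      t.label [] = some (liftJ (js[k]'(hk.trans_le hle)))) :
    RootsMatch ts js := by
  refine rootsMatch_iff.mpr ⟨hle, fun k hk => ?_⟩
  obtain ⟨t, ht, hroot⟩ := h k hk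
  rw [List.getElem?_eq_getElem hk, Option.some_inj] at ht
  rwa [ht]

theorem rootsMatch_append_singleton {ts : List (OTree (Judg C R))} {t : OTree (Judg C R)}
    {js : List (C × R)} :
    RootsMatch (ts ++ [t]) js ↔
      RootsMatch ts js ∧
        ∃ hlt : ts.length < js.length, t.label [] = some (liftJ js[ts.length]) := by
  constructor
  · intro h
    have hlt : ts.length < js.length := by simpa using h.length_le
    unfold RootsMatch at h
    rw [List.length_append, List.length_singleton, ← List.take_append_getElem hlt,
      List.map_append, List.map_append] at h
    obtain ⟨hts, ht⟩ := List.append_inj h (by simp [hlt.le])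
    exact ⟨hts, hlt, by simpa using ht⟩
  · rintro ⟨hts, hlt, ht⟩
    unfold RootsMatch at hts ⊢
    rw [List.length_append, List.length_singleton, ← List.take_append_getElem hlt,
      List.map_append, List.map_append, hts]
    simp [ht]

theorem RootsMatch.rootsMatch_iff_take_eq {ts : List (OTree (Judg C R))} {js js' : List (C × R)}
    (h : RootsMatch ts js) : RootsMatch ts js' ↔ js'.take ts.length = js.take ts.length := by
  have hinj : Function.Injective (List.map (some ∘ liftJ : C × R → Option (Judg C R))) :=
    List.map_injective_iff.mpr ((Option.some_injective _).comp liftJ_injective)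
  rw [RootsMatch, h, hinj.eq_iff, eq_comm]

end RootsMatch

section Runs

variable {C R : Type} {Rules : Set (List (C × R) × (C × R))}

def IrreducibleTree (Rules : Set (List (C × R) × (C × R))) (t : OTree (Judg C R)) : Prop :=
  ¬ ∃ t', Step Rules t t'

theorem Step.root {t t' : OTree (Judg C R)} (h : Step Rules t t') :
    ∃ d js res u, (js, (d, res)) ∈ Rules ∧
      t.label [] = some (d, none) ∧ t'.label [] = some (d, u) := by
  cases h with
  | tr1 c r hR => exact ⟨c, [], r, some r, hR, by simp, by simp⟩
  | tr2 js c res _ hR => exact ⟨c, js, res, none, hR, by simp, by simp⟩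
  | tr3 js c res _ hR => exact ⟨c, js, res, some res, hR, by simp, by simp⟩
  | tr4 js c res _ hR => exact ⟨c, js, res, none, hR, by simp, by simp⟩
  | tr5 js c res _ _ _ hR => exact ⟨c, js, res, none, hR, by simp, by simp⟩

theorem irreducibleTree_of_root {t : OTree (Judg C R)} {d : C} {r : R}
    (ht : t.label [] = some (d, some r)) : IrreducibleTree Rules t := by
  rintro ⟨t', hstep⟩
  obtain ⟨_, _, _, _, _, hroot, _⟩ := hstep.root
  simp [ht] at hroot

theorem irreducibleTree_leafT_iff {d : C} :
    IrreducibleTree Rules (leafT (d, none)) ↔ ¬ ∃ js res, (js, (d, res)) ∈ Rules := by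
  constructor
  · rintro hirr ⟨js, res, hR⟩
    rcases eq_or_ne js [] with rfl | hjs
    · exact hirr ⟨_, Step.tr1 d res hR⟩
    · exact hirr ⟨_, Step.tr2 js d res hjs hR⟩
  · rintro hno ⟨t', hstep⟩
    obtain ⟨d', js, res, _, hR, hroot, _⟩ := hstep.root
    obtain rfl : d = d' := by simpa using hroot
    exact hno ⟨js, res, hR⟩

theorem root_of_reflTransGen {t t' : OTree (Judg C R)} {d : C} {u : Option R}
    (h : ReflTransGen (Step Rules) t t') (ht : t.label [] = some (d, u)) :
    ∃ u', t'.label [] = some (d, u') := by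
  induction h with
  | refl => exact ⟨u, ht⟩
  | tail _ hstep ih =>
    obtain ⟨u', hu'⟩ := ih
    obtain ⟨_, _, _, u'', _, hsrc, htgt⟩ := hstep.root
    obtain ⟨rfl, -⟩ : _ ∧ u' = none := by simpa using hu'.symm.trans hsrc
    exact ⟨u'', htgt⟩

theorem reflTransGen_nodeT_append {js : List (C × R)} {c : C} {res : R}
    (hR : (js, (c, res)) ∈ Rules) {trs : List (OTree (Judg C R))} (hlt : trs.length < js.length)
    (htrs : RootsMatch trs js) {a b : OTree (Judg C R)} (hab : ReflTransGen (Step Rules) a b)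
    (ha : ∃ u, a.label [] = some (js[trs.length].1, u)) :
    ReflTransGen (Step Rules) (nodeT (c, none) (trs ++ [a])) (nodeT (c, none) (trs ++ [b])) := by
  induction hab with
  | refl => exact .refl
  | @tail b' b hab' hstep ih =>
    obtain ⟨u, hu⟩ := ha
    obtain ⟨u', hb'⟩ := root_of_reflTransGen hab' hu
    obtain ⟨_, _, _, _, _, hsrc, _⟩ := hstep.root
    obtain ⟨-, rfl⟩ : _ ∧ u' = none := by simpa using hb'.symm.trans hsrc
    exact ih.tail
      (Step.tr5 js c res trs b' b hR hlt (fun k hk => htrs.exists_getElem? k hk _) hb' hstep)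

theorem reflTransGen_leafT_nodeT {js : List (C × R)} {c : C} {res : R}
    (hR : (js, (c, res)) ∈ Rules) (ts : List (OTree (Judg C R))) (hts : RootsMatch ts js)
    (hreach : ∀ t ∈ ts, ∃ d, ReflTransGen (Step Rules) (leafT (d, none)) t)
    (hlt : ts.length < js.length) {T : OTree (Judg C R)}
    (hT : ReflTransGen (Step Rules) (leafT (js[ts.length].1, none)) T) :
    ReflTransGen (Step Rules) (leafT (c, none)) (nodeT (c, none) (ts ++ [T])) := by
  induction ts using List.reverseRecOn generalizing T with
  | nil =>
    have hstart := Step.tr2 js c res (List.ne_nil_of_length_pos hlt) hR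
    rw [List.head_eq_getElem] at hstart
    exact .head hstart (reflTransGen_nodeT_append hR hlt hts hT ⟨none, by simp⟩)
  | append_singleton ts t ih =>
    obtain ⟨hts', hlt', ht⟩ := rootsMatch_append_singleton.mp hts
    obtain ⟨d, hd⟩ := hreach t (by simp)
    obtain ⟨u, hu⟩ := root_of_reflTransGen hd (d := d) (u := none) (by simp)
    obtain ⟨rfl, -⟩ : d = _ ∧ _ := by simpa [liftJ] using hu.symm.trans ht
    have hopen :=
      Step.tr4 js c res (ts ++ [t]) hR (by simp) hlt fun k hk => hts.exists_getElem? k hk _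
    exact ((ih hts' (fun s hs => hreach s (by simp [hs])) hlt' hd).tail hopen).trans
      (reflTransGen_nodeT_append hR hlt hts hT ⟨none, by simp⟩)

end Runs

section Stuck

variable {C R : Type} {Rules : Set (List (C × R) × (C × R))}

theorem Step.of_nodeT_append {c : C} {ts : List (OTree (Judg C R))} {s t' : OTree (Judg C R)}
    (h : Step Rules (nodeT (c, none) (ts ++ [s])) t') :
    (∃ js res, (js, (c, res)) ∈ Rules ∧ RootsMatch (ts ++ [s]) js) ∨
      ∃ s', Step Rules s s' := by
  generalize hsrc : nodeT (c, none) (ts ++ [s]) = src at h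
  cases h with
  | tr1 => exact absurd hsrc.symm (leafT_ne_nodeT (by simp))
  | tr2 => exact absurd hsrc.symm (leafT_ne_nodeT (by simp))
  | tr3 js c' res trs hR hlen hroots =>
    obtain ⟨hc, rfl⟩ := nodeT_inj hsrc
    obtain rfl : c = c' := by simpa using hc
    exact .inl ⟨js, res, hR, rootsMatch_of_getElem? hlen.le fun k hk => hroots k (hlen ▸ hk)⟩
  | tr4 js c' res trs hR _ hlt hroots =>
    obtain ⟨hc, rfl⟩ := nodeT_inj hsrc
    obtain rfl : c = c' := by simpa using hc
    exact .inl ⟨js, res, hR, rootsMatch_of_getElem? hlt.le hroots⟩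
  | tr5 js c' res trs t t'' hR hlt hroots hconf hstep =>
    obtain ⟨-, hts⟩ := nodeT_inj hsrc
    obtain rfl : s = t := List.singleton_inj.mp (List.append_inj' hts rfl).2
    exact .inr ⟨t'', hstep⟩

theorem irreducibleTree_nodeT_append_iff {js : List (C × R)} {c : C} {res : R}
    (hR : (js, (c, res)) ∈ Rules) {ts : List (OTree (Judg C R))} (hlt : ts.length < js.length)
    (hts : RootsMatch ts js) {s : OTree (Judg C R)}
    (hs : ∃ u, s.label [] = some (js[ts.length].1, u)) :
    IrreducibleTree Rules (nodeT (c, none) (ts ++ [s])) ↔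
      (¬ ∃ js' res', (js', (c, res')) ∈ Rules ∧ RootsMatch (ts ++ [s]) js') ∧
        IrreducibleTree Rules s := by
  constructor
  · intro hirr
    refine ⟨?_, ?_⟩
    · rintro ⟨js', res', hR', hmatch⟩
      have hle := hmatch.length_le
      rcases hle.eq_or_lt with hlen | hlt'
      · exact hirr ⟨_, Step.tr3 js' c res' _ hR' hlen
          fun k hk => hmatch.exists_getElem? k (hlen ▸ hk) hk⟩
      · exact hirr ⟨_, Step.tr4 js' c res' _ hR' (by simp) hlt'
          fun k hk => hmatch.exists_getElem? k hk _⟩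
    · rintro ⟨s', hstep⟩
      obtain ⟨u, hu⟩ := hs
      obtain ⟨_, _, _, _, _, hsrc, _⟩ := hstep.root
      obtain ⟨-, rfl⟩ : _ ∧ u = none := by simpa using hu.symm.trans hsrc
      exact hirr
        ⟨_, Step.tr5 js c res ts s s' hR hlt (fun k hk => hts.exists_getElem? k hk _) hu hstep⟩
  · rintro ⟨hno, hirr⟩ ⟨t', hstep⟩
    rcases hstep.of_nodeT_append with hmatch | hs'
    · exact hno hmatch
    · exact hirr hs'

theorem agreeUpTo_iff_exists_rootsMatch {js : List (C × R)} {c : C}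
    {ts : List (OTree (Judg C R))} (hlt : ts.length < js.length) (hts : RootsMatch ts js)
    {s : OTree (Judg C R)} {r : R} (hs : s.label [] = some (js[ts.length].1, some r)) :
    AgreeUpTo Rules js c ts.length hlt r ↔
      ∃ js' res', (js', (c, res')) ∈ Rules ∧ RootsMatch (ts ++ [s]) js' := by
  simp only [AgreeUpTo, rootsMatch_append_singleton, hts.rootsMatch_iff_take_eq, hs, liftJ,
    Option.some_inj, Prod.mk.injEq]
  constructor
  · rintro ⟨js', res', hlt', hR', htake, hfst, hsnd⟩
    exact ⟨js', res', hR', htake, hlt', hfst.symm, hsnd.symm⟩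
  · rintro ⟨js', res', hR', htake, hlt', hfst, hsnd⟩
    exact ⟨js', res', hlt', hR', htake, hfst.symm, hsnd.symm⟩

end Stuck

section Completeness

variable {C R : Type} {Rules : Set (List (C × R) × (C × R))}

def Realizable (Rules : Set (List (C × R) × (C × R))) (j : Judg C R) : Prop :=
  ∃ T : OTree (Judg C R), ReflTransGen (Step Rules) (leafT (j.1, none)) T ∧
    T.label [] = some j ∧ (j.2 = none → IrreducibleTree Rules T)

theorem exists_children_of_realizable {js : List (C × R)}
    (h : ∀ j ∈ js, Realizable Rules (liftJ j)) :
    ∃ ts : List (OTree (Judg C R)), ts.map (·.label []) = js.map (some ∘ liftJ) ∧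
      ∀ t ∈ ts, ∃ d, ReflTransGen (Step Rules) (leafT (d, none)) t := by
  induction js with
  | nil => exact ⟨[], rfl, by simp⟩
  | cons j js ih =>
    obtain ⟨T, hrun, hroot, -⟩ := h j (by simp)
    obtain ⟨ts, hts, hreach⟩ := ih fun j' hj' => h j' (by simp [hj'])
    refine ⟨T :: ts, by simp [hroot, hts], ?_⟩
    simpa using ⟨⟨_, hrun⟩, hreach⟩

theorem exists_reflTransGen_nodeT {js : List (C × R)} {c : C} {res : R}
    (hR : (js, (c, res)) ∈ Rules) {i : ℕ} (hi : i < js.length)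
    (hpre : ∀ j ∈ js.take i, Realizable Rules (liftJ j)) {T : OTree (Judg C R)}
    (hT : ReflTransGen (Step Rules) (leafT (js[i].1, none)) T) :
    ∃ ts, ts.length = i ∧ RootsMatch ts js ∧
      ReflTransGen (Step Rules) (leafT (c, none)) (nodeT (c, none) (ts ++ [T])) := by
  obtain ⟨ts, hroots, hreach⟩ := exists_children_of_realizable hpre
  have hlen : ts.length = i := by simpa [hi.le] using congrArg List.length hroots
  subst hlen
  exact ⟨ts, rfl, hroots, reflTransGen_leafT_nodeT hR ts hroots hreach hi hT⟩

theorem realizable_of_indDerives {j : Judg C R} (h : IndDerives (RulesWr Rules) j) :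
    Realizable Rules j := by
  induction h with
  | node ps j hrule _ ih =>
    rcases hrule with ⟨js, c, res, hR, hj⟩ | ⟨c, hno, hj⟩
      | ⟨js, c, res, i, hi, r, hR, hdisagree, hj⟩ | ⟨js, c, res, i, hi, hR, hj⟩ <;>
    obtain ⟨rfl, rfl⟩ := Prod.mk.inj hj
    · simp only [List.mem_map, forall_exists_index, and_imp, forall_apply_eq_imp_iff₂] at ih
      rcases eq_or_ne js [] with rfl | hne
      · exact ⟨leafT (c, some res), .single (Step.tr1 c res hR), by simp, by simp⟩
      have hi : js.length - 1 < js.length := Nat.sub_one_lt (by simpa using hne)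
      obtain ⟨T, hT, hroot, -⟩ := ih _ (List.getElem_mem hi)
      obtain ⟨ts, hlen, hts, hrun⟩ :=
        exists_reflTransGen_nodeT hR hi (fun j hj => ih j (List.mem_of_mem_take hj)) hT
      have hall : RootsMatch (ts ++ [T]) js :=
        rootsMatch_append_singleton.mpr ⟨hts, hlen ▸ hi, by simpa [hlen] using hroot⟩
      refine ⟨_, hrun.tail (Step.tr3 js c res _ hR (by simp [hlen]; omega)
        fun k hk => hall.exists_getElem? k (by simp [hlen]; omega) hk), by simp, by simp⟩
    · exact ⟨leafT (c, none), .refl, by simp, fun _ => irreducibleTree_leafT_iff.mpr hno⟩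
    all_goals
      simp only [List.mem_append, List.mem_map, List.mem_singleton, or_imp, forall_and,
        forall_exists_index, and_imp, forall_apply_eq_imp_iff₂, forall_eq] at ih
      obtain ⟨hpre, T, hT, hroot, hirr⟩ := ih
      obtain ⟨ts, rfl, hts, hrun⟩ := exists_reflTransGen_nodeT hR hi hpre hT
      refine ⟨_, hrun, by simp, fun _ => ?_⟩
      rw [irreducibleTree_nodeT_append_iff hR hi hts ⟨_, hroot⟩]
    · rw [← agreeUpTo_iff_exists_rootsMatch hi hts hroot]
      exact ⟨hdisagree, irreducibleTree_of_root hroot⟩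
    · refine ⟨?_, hirr rfl⟩
      rintro ⟨js', res', -, hmatch⟩
      obtain ⟨-, _, hroot'⟩ := rootsMatch_append_singleton.mp hmatch
      simp [hroot, liftJ] at hroot'

end Completeness

section Soundness

variable {C R : Type} {Rules : Set (List (C × R) × (C × R))}

theorem RootsMatch.exists_mem_of_mem_take {ts : List (OTree (Judg C R))} {js : List (C × R)}
    (h : RootsMatch ts js) {j : C × R} (hj : j ∈ js.take ts.length) :
    ∃ t ∈ ts, t.label [] = some (liftJ j) := by
  have hmem : some (liftJ j) ∈ ts.map (·.label []) := by
    rw [h]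
    exact List.mem_map_of_mem (f := some ∘ liftJ) hj
  obtain ⟨t, ht, hroot⟩ := List.mem_map.mp hmem
  exact ⟨t, ht, hroot⟩

theorem RootsMatch.exists_mem_take_of_mem {ts : List (OTree (Judg C R))} {js : List (C × R)}
    (h : RootsMatch ts js) {t : OTree (Judg C R)} (ht : t ∈ ts) :
    ∃ j ∈ js.take ts.length, t.label [] = some (liftJ j) := by
  have hmem : t.label [] ∈ (js.take ts.length).map (some ∘ liftJ) := by
    rw [← h]
    exact List.mem_map_of_mem ht
  obtain ⟨j, hj, hroot⟩ := List.mem_map.mp hmem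
  exact ⟨j, hj, hroot.symm⟩

/-- The invariant of runs from an initial tree. -/
inductive Sound (Rules : Set (List (C × R) × (C × R))) : OTree (Judg C R) → Prop
  | leaf (d : C) : Sound Rules (leafT (d, none))
  | node {js : List (C × R)} {c : C} {res : R} {ts : List (OTree (Judg C R))}
      {s : OTree (Judg C R)} (hR : (js, (c, res)) ∈ Rules) (hlt : ts.length < js.length)
      (hts : RootsMatch ts js)
      (hder : ∀ j ∈ js.take ts.length, IndDerives (RulesWr Rules) (liftJ j))
      (hs : ∃ u, s.label [] = some (js[ts.length].1, u)) (hsound : Sound Rules s) :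
      Sound Rules (nodeT (c, none) (ts ++ [s]))
  | complete {t : OTree (Judg C R)} {d : C} {r : R} (ht : t.label [] = some (d, some r))
      (hd : IndDerives (RulesWr Rules) (d, some r)) : Sound Rules t

namespace Sound

theorem indDerives_of_root {t : OTree (Judg C R)} (h : Sound Rules t) {d : C} {r : R}
    (ht : t.label [] = some (d, some r)) : IndDerives (RulesWr Rules) (d, some r) := by
  cases h with
  | leaf => simp at ht
  | node => simp at ht
  | complete ht' hd =>
    obtain ⟨rfl, rfl⟩ : _ ∧ _ := by simpa using ht'.symm.trans ht
    exact hd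

theorem of_nodeT_append {c : C} {ts : List (OTree (Judg C R))} {s : OTree (Judg C R)}
    (h : Sound Rules (nodeT (c, none) (ts ++ [s]))) :
    ∃ js res, (js, (c, res)) ∈ Rules ∧ ∃ hlt : ts.length < js.length, RootsMatch ts js ∧
      (∀ j ∈ js.take ts.length, IndDerives (RulesWr Rules) (liftJ j)) ∧
      (∃ u, s.label [] = some (js[ts.length].1, u)) ∧ Sound Rules s := by
  generalize hsrc : nodeT (c, none) (ts ++ [s]) = src at h
  cases h with
  | leaf => exact absurd hsrc.symm (leafT_ne_nodeT (by simp))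
  | @node js c' res ts' s' hR hlt hts hder hs hsound =>
    obtain ⟨hc, hchildren⟩ := nodeT_inj hsrc
    obtain rfl : c = c' := by simpa using hc
    obtain ⟨rfl, hlast⟩ := List.append_inj' hchildren rfl
    obtain rfl := List.singleton_inj.mp hlast
    exact ⟨js, res, hR, hlt, hts, hder, hs, hsound⟩
  | complete ht => simp [← hsrc] at ht

theorem indDerives_of_rootsMatch {c : C} {trs : List (OTree (Judg C R))}
    (h : Sound Rules (nodeT (c, none) trs)) {js : List (C × R)} (hm : RootsMatch trs js) :
    ∀ j ∈ js.take trs.length, IndDerives (RulesWr Rules) (liftJ j) := by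
  intro j hj
  obtain ⟨t, ht, hroot⟩ := hm.exists_mem_of_mem_take hj
  obtain ⟨ts, s, rfl⟩ := (List.eq_nil_or_concat' trs).resolve_left (List.ne_nil_of_mem ht)
  obtain ⟨_, _, _, _, hts, hder, _, hsound⟩ := h.of_nodeT_append
  rcases List.mem_append.mp ht with ht | ht
  · obtain ⟨j₀, hj₀, hroot₀⟩ := hts.exists_mem_take_of_mem ht
    obtain rfl := liftJ_injective (Option.some_injective _ (hroot₀.symm.trans hroot))
    exact hder j₀ hj₀
  · obtain rfl := List.mem_singleton.mp ht
    exact hsound.indDerives_of_root hroot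

theorem step {t t' : OTree (Judg C R)} (hstep : Step Rules t t') (h : Sound Rules t) :
    Sound Rules t' := by
  induction hstep with
  | tr1 c r hR => exact .complete (by simp) (.node _ _ (.inl ⟨[], c, r, hR, rfl⟩) (by simp))
  | tr2 js c res hne hR =>
    rw [List.head_eq_getElem]
    exact .node (ts := []) hR (List.length_pos_iff.mpr hne) (by simp) (by simp) ⟨none, by simp⟩
      (.leaf _)
  | tr3 js c res trs hR hlen hroots =>
    have hm := rootsMatch_of_getElem? hlen.le fun k hk => hroots k (hlen ▸ hk)
    refine .complete (by simp) (.node _ _ (.inl ⟨js, c, res, hR, rfl⟩) ?_)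
    intro p hp
    obtain ⟨j, hj, rfl⟩ := List.mem_map.mp hp
    exact h.indDerives_of_rootsMatch hm j (by rwa [hlen, List.take_length])
  | tr4 js c res trs hR _ hlt hroots =>
    have hm := rootsMatch_of_getElem? hlt.le hroots
    exact .node hR hlt hm (h.indDerives_of_rootsMatch hm) ⟨none, by simp⟩ (.leaf _)
  | tr5 js c res trs t t' hR hlt hroots hconf hstep ih =>
    obtain ⟨_, _, hR₀, hlt₀, hts₀, hder₀, ⟨u, hu⟩, hsound⟩ := h.of_nodeT_append
    obtain ⟨_, _, _, u', _, hsrc, htgt⟩ := hstep.root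
    obtain ⟨rfl, -⟩ : _ ∧ u = none := by simpa using hu.symm.trans hsrc
    exact .node hR₀ hlt₀ hts₀ hder₀ ⟨u', htgt⟩ (ih hsound)

theorem reflTransGen {t t' : OTree (Judg C R)} (hrun : ReflTransGen (Step Rules) t t')
    (h : Sound Rules t) : Sound Rules t' := by
  induction hrun with
  | refl => exact h
  | tail _ hstep ih => exact ih.step hstep

theorem indDerives_of_irreducibleTree {t : OTree (Judg C R)} (h : Sound Rules t)
    (hirr : IrreducibleTree Rules t) {d : C} (ht : t.label [] = some (d, none)) : IndDerives (RulesWr Rules) (d, none) := by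
  induction h generalizing d with
  | leaf d' =>
    obtain rfl : d' = d := by simpa using ht
    exact .node [] _ (.inr (.inl ⟨d', irreducibleTree_leafT_iff.mp hirr, rfl⟩)) (by simp)
  | @node js c res ts s hR hlt hts hder hs hsound ih =>
    obtain rfl : c = d := by simpa using ht
    obtain ⟨hno, hirr_s⟩ := (irreducibleTree_nodeT_append_iff hR hlt hts hs).mp hirr
    obtain ⟨u, hu⟩ := hs
    have hpremises {x : Judg C R} (hx : IndDerives (RulesWr Rules) x) :
        ∀ p ∈ (js.take ts.length).map liftJ ++ [x], IndDerives (RulesWr Rules) p := by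
      simp only [List.mem_append, List.mem_map, List.mem_singleton]
      rintro p (⟨j, hj, rfl⟩ | rfl)
      exacts [hder j hj, hx]
    rcases u with _ | r
    · exact .node _ _ (.inr (.inr (.inr ⟨js, c, res, ts.length, hlt, hR, rfl⟩)))
        (hpremises (ih hirr_s hu))
    · have hdisagree := mt (agreeUpTo_iff_exists_rootsMatch hlt hts hu).mp hno
      exact .node _ _ (.inr (.inr (.inl ⟨js, c, res, ts.length, hlt, r, hR, hdisagree, rfl⟩)))
        (hpremises (hsound.indDerives_of_root hu))
  | complete ht' => simp [ht'] at ht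

end Sound

end Soundness

/-- correctness of the wrong construction: `c ⇒ wrong` is
    inductively derivable iff the initial partial evaluation tree with single
    node `c ⇒ ?` reaches a stuck tree in finitely many transition steps. -/
theorem wrong_correct {C R : Type}
    (Rules : Set (List (C × R) × (C × R))) (c : C) :
    IndDerives (RulesWr Rules) ((c, none) : Judg C R) ↔
      ∃ t : OTree (Judg C R),
        Relation.ReflTransGen (Step Rules) (leafT (c, none)) t ∧
        (¬ ∃ t', Step Rules t t') ∧
        (∃ (c' : C), t.label [] = some (c', none)) := by
  constructor
  · intro h
    obtain ⟨t, hrun, hroot, hirr⟩ := realizable_of_indDerives h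
    exact ⟨t, hrun, hirr rfl, c, hroot⟩
  · rintro ⟨t, hrun, hirr, c', hroot⟩
    obtain ⟨u, hu⟩ := root_of_reflTransGen hrun (d := c) (u := none) (by simp)
    obtain ⟨rfl, -⟩ : c = c' ∧ _ := by simpa using hu.symm.trans hroot
    exact ((Sound.leaf c).reflTransGen hrun).indDerives_of_irreducibleTree hirr hroot
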